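/- Fix k ≥ 1 and let C = (F, Init, P) be a deterministic transition system over input type I and state type S. If P'_k is 1-inductive in the witness system C'_k (i.e., for every initial state w of C'_k and every input i, P'_k i w holds; and for every witness state w and all inputs i0, i1, P'_k i0 w implies P'_k i1 (F'_k i0 w)), then P is k-inductive in C. -/

import Mathlib

/-- A (deterministic) trace: `s (n+1) = F (x n) (s n)` for all `n`. -/
def IsTrace {I S : Type*} (F : I → S → S) (x : ℕ → I) (s : ℕ → S) : Prop :=
  ∀ n, s (n + 1) = F (x n) (s n)

/-- The system `(F, Init, P)` is safe: every initialized trace satisfies the property. -/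
def Safe {I S : Type*} (F : I → S → S) (Init : Set S) (P : I → S → Prop) : Prop :=
  ∀ x s, IsTrace F x s → s 0 ∈ Init → ∀ n, P (x n) (s n)

/-- `P` is `k`-inductive in `(F, Init, P)`: BMC of depth `k-1` and consecution of depth `k`. -/
def KInductive {I S : Type*} (k : ℕ) (F : I → S → S) (Init : Set S) (P : I → S → Prop) :
    Prop :=
  (∀ x s, IsTrace F x s → s 0 ∈ Init → ∀ n < k, P (x n) (s n)) ∧
  (∀ x s, IsTrace F x s → (∀ n < k, P (x n) (s n)) → P (x k) (s k))

/-- The state type of the witness system: `k` copies of the latches,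
`k-1` copies of the inputs, and `k` initialization bits. -/
abbrev WState (k : ℕ) (I S : Type*) : Type _ :=
  (Fin k → S) × (Fin (k - 1) → I) × (Fin k → Bool)

/-- The transition function of the witness system. -/
def WTrans {I S : Type*} (k : ℕ) (F : I → S → S) (i : I) (w : WState k I S) :
    WState k I S :=
  ⟨fun j => if _h : (j : ℕ) = k - 1 then F i (w.1 j) else w.1 ⟨(j : ℕ) + 1, by omega⟩,
   fun j => if _h : (j : ℕ) = k - 2 then i else w.2.1 ⟨(j : ℕ) + 1, by omega⟩,
   fun j => if _h : (j : ℕ) = k - 1 then w.2.2 j else w.2.2 ⟨(j : ℕ) + 1, by omega⟩⟩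

/-- The initial states of the witness system. -/
def WInit (k : ℕ) (hk : 0 < k) (I : Type*) {S : Type*} (Init : Set S) :
    Set (WState k I S) :=
  {w | w.1 ⟨k - 1, by omega⟩ ∈ Init ∧ w.2.2 ⟨k - 1, by omega⟩ = true ∧
       ∀ j : Fin k, (j : ℕ) < k - 1 → w.2.2 j = false}

/-- The extended input sequence `X`: `X j = x j` for `j < k - 1` and `X (k-1) = i`. -/
def WX {I : Type*} (k : ℕ) (i : I) (x : Fin (k - 1) → I) (j : Fin k) : I :=
  if h : (j : ℕ) = k - 1 then i else x ⟨(j : ℕ), by omega⟩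

/-- The property of the witness system: the conjunction of `p0`–`p4`. -/
def WProp {I S : Type*} (k : ℕ) (hk : 0 < k) (F : I → S → S) (Init : Set S)
    (P : I → S → Prop) (i : I) (w : WState k I S) : Prop :=
  (∀ j : Fin k, ∀ hj : (j : ℕ) < k - 1,
      w.2.2 j = true → w.2.2 ⟨(j : ℕ) + 1, by omega⟩ = true) ∧
  (∀ j : Fin k, ∀ hj : (j : ℕ) < k - 1,
      w.2.2 j = true → w.1 ⟨(j : ℕ) + 1, by omega⟩ = F (WX k i w.2.1 j) (w.1 j)) ∧
  (∀ j : Fin k, w.2.2 j = true → P (WX k i w.2.1 j) (w.1 j)) ∧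
  (∀ j : Fin k, 1 ≤ (j : ℕ) →
      w.2.2 ⟨(j : ℕ) - 1, by omega⟩ = false → w.2.2 j = true → w.1 j ∈ Init) ∧
  (w.2.2 ⟨k - 1, by omega⟩ = true)

/-!
The last copy `ℓ (k-1)` of the witness system runs `C` itself, and there `p2 ∧ p4` says exactly
`P`. BMC: `1`-induction makes the witness system safe, and every initialized trace of `C` is the
last copy of an initialized witness trace, so `C` is even safe. Consecution: a window of `k`
consecutive states satisfying `P`, with all bits set, satisfies `P'_k`, and one witness step
shifts `s k` into the last copy.
-/

section Traces

variable {I S : Type*}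

def traceFrom (F : I → S → S) (x : ℕ → I) (s₀ : S) : ℕ → S :=
  fun n => Nat.rec s₀ (fun m sm => F (x m) sm) n

theorem isTrace_traceFrom (F : I → S → S) (x : ℕ → I) (s₀ : S) :
    IsTrace F x (traceFrom F x s₀) :=
  fun _ => rfl

theorem IsTrace.eq_of_zero_eq {F : I → S → S} {x : ℕ → I} {s t : ℕ → S}
    (hs : IsTrace F x s) (ht : IsTrace F x t) (h0 : s 0 = t 0) : s = t := by
  funext n
  induction n with
  | zero => exact h0
  | succ n ih => rw [hs, ht, ih]

theorem safe_of_oneInductive {F : I → S → S} {Init : Set S} {P : I → S → Prop}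
    (hbmc : ∀ s ∈ Init, ∀ i, P i s) (hconsec : ∀ s i₀ i₁, P i₀ s → P i₁ (F i₀ s)) :
    Safe F Init P := by
  intro x s hs h0 n
  induction n with
  | zero => exact hbmc _ h0 _
  | succ n ih => rw [hs]; exact hconsec _ _ _ ih

end Traces

section Witness

variable {k : ℕ} {I S : Type*}

theorem WX_of_val_eq (i : I) (x : Fin (k - 1) → I) {j : Fin k} (hj : (j : ℕ) = k - 1) :
    WX k i x j = i :=
  dif_pos hj

theorem WTrans_fst_last (hk : 0 < k) (F : I → S → S) (i : I) (w : WState k I S) :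
    (WTrans k F i w).1 ⟨k - 1, by omega⟩ = F i (w.1 ⟨k - 1, by omega⟩) :=
  dif_pos rfl

theorem WProp.prop_last {hk : 0 < k} {F : I → S → S} {Init : Set S} {P : I → S → Prop}
    {i : I} {w : WState k I S} (h : WProp k hk F Init P i w) :
    P i (w.1 ⟨k - 1, by omega⟩) := by
  have hlast := h.2.2.1 ⟨k - 1, by omega⟩ h.2.2.2.2
  rwa [WX_of_val_eq i w.2.1 (j := ⟨k - 1, by omega⟩) rfl] at hlast

theorem IsTrace.wTrans_fst_last (hk : 0 < k) {F : I → S → S} {x : ℕ → I}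
    {w : ℕ → WState k I S} (hw : IsTrace (WTrans k F) x w) :
    IsTrace F x (fun n => (w n).1 ⟨k - 1, by omega⟩) := by
  intro n
  simp only [hw n]
  exact WTrans_fst_last hk F (x n) (w n)

/-- Only the last copy is active; `i` merely fills the input slots. -/
def initWitness (k : ℕ) (s₀ : S) (i : I) : WState k I S :=
  (fun _ => s₀, fun _ => i, fun j => decide ((j : ℕ) = k - 1))

theorem initWitness_mem_WInit (hk : 0 < k) {Init : Set S} {s₀ : S} (h : s₀ ∈ Init) (i : I) :
    initWitness k s₀ i ∈ WInit k hk I Init :=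
  ⟨h, decide_eq_true rfl, fun _ hj => decide_eq_false (Nat.ne_of_lt hj)⟩

def windowWitness (k : ℕ) (x : ℕ → I) (s : ℕ → S) : WState k I S :=
  (fun j => s j, fun j => x j, fun _ => true)

theorem WX_window (x : ℕ → I) (j : Fin k) : WX k (x (k - 1)) (fun j => x j) j = x j := by
  unfold WX
  split_ifs with h
  · rw [h]
  · rfl

theorem wProp_windowWitness (hk : 0 < k) {F : I → S → S} {Init : Set S} {P : I → S → Prop}
    {x : ℕ → I} {s : ℕ → S} (hs : IsTrace F x s) (hP : ∀ n < k, P (x n) (s n)) :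
    WProp k hk F Init P (x (k - 1)) (windowWitness k x s) := by
  refine ⟨fun _ _ _ => rfl, fun j _ _ => ?_, fun j _ => ?_, fun _ _ h _ => ?_, rfl⟩
  · simp only [windowWitness, WX_window]
    exact hs j
  · simp only [windowWitness, WX_window]
    exact hP j j.2
  · exact Bool.noConfusion h

theorem WTrans_windowWitness_fst_last (hk : 0 < k) {F : I → S → S} {x : ℕ → I} {s : ℕ → S}
    (hs : IsTrace F x s) :
    (WTrans k F (x (k - 1)) (windowWitness k x s)).1 ⟨k - 1, by omega⟩ = s k := by
  rw [WTrans_fst_last hk, windowWitness, ← hs, Nat.sub_add_cancel hk]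

theorem safe_of_safe_witness (hk : 0 < k) {F : I → S → S} {Init : Set S} {P : I → S → Prop}
    (h : Safe (WTrans k F) (WInit k hk I Init) (WProp k hk F Init P)) : Safe F Init P := by
  intro x s hs h0 n
  let w := traceFrom (WTrans k F) x (initWitness k (s 0) (x 0))
  have hw : IsTrace (WTrans k F) x w := isTrace_traceFrom _ _ _
  have hlast : (fun n => (w n).1 ⟨k - 1, by omega⟩) = s :=
    (hw.wTrans_fst_last hk).eq_of_zero_eq hs rfl
  have hP := (h x w hw (initWitness_mem_WInit hk h0 (x 0)) n).prop_last
  rwa [congrFun hlast n] at hP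

end Witness

/-- If `P'_k` is `1`-inductive in the witness system `C'_k`, then `P` is
`k`-inductive in `C`. -/
theorem witness_oneInductive_kInductive (k : ℕ) (hk : 0 < k) {I S : Type*}
    (F : I → S → S) (Init : Set S) (P : I → S → Prop)
    (hbmc' : ∀ w ∈ WInit k hk I Init, ∀ i : I, WProp k hk F Init P i w)
    (hconsec' : ∀ (w : WState k I S) (i0 i1 : I),
      WProp k hk F Init P i0 w → WProp k hk F Init P i1 (WTrans k F i0 w)) :
    KInductive k F Init P := by
  have hsafe : Safe F Init P := safe_of_safe_witness hk (safe_of_oneInductive hbmc' hconsec')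
  refine ⟨fun x s hs h0 n _ => hsafe x s hs h0 n, fun x s hs hP => ?_⟩
  have hstep := (hconsec' _ _ (x k) (wProp_windowWitness hk hs hP)).prop_last
  rwa [WTrans_windowWitness_fst_last hk hs] at hstep
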